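/- arXiv:2506.19308 — 2 statements merged into one kernel-verified Lean document; each statement's English description precedes it below -/
import Mathlib

section
/- Let A ∈ ℍ^{m×n} be a quaternion matrix, let S₁ ∈ ℍ^{n×p} and T₁ ∈ ℍ^{q×m}, let Y ∈ ℍ^{p×q} be a {1}-inverse of T₁AS₁, and set X = S₁YT₁. Then X satisfies the three conditions XAX = X, R_r(X) = R_r(S₁), and N_r(X) = N_r(T₁) if and only if rank(T₁AS₁) = rank(S₁) = rank(T₁); moreover, when these rank equalities hold, X is the unique quaternion matrix in ℍ^{n×m} satisfying these three conditions. -/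
open Matrix

noncomputable section

/-- The real quaternion division ring ℍ. -/
abbrev Quat : Type := Quaternion ℝ

/-- Left range `R_l(A) = {xA : x ∈ ℍ^{1×m}} ⊆ ℍ^{1×n}`. -/
def leftRange {m n : ℕ} (A : Matrix (Fin m) (Fin n) Quat) : Set (Fin n → Quat) :=
  {y | ∃ x : Fin m → Quat, y = Matrix.vecMul x A}

/-- Left null space `N_l(A) = {x ∈ ℍ^{1×m} : xA = 0}`. -/
def leftNull {m n : ℕ} (A : Matrix (Fin m) (Fin n) Quat) : Set (Fin m → Quat) :=
  {x | Matrix.vecMul x A = 0}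

/-- Right range `R_r(A) = {Ax : x ∈ ℍ^{n×1}} ⊆ ℍ^{m×1}`. -/
def rightRange {m n : ℕ} (A : Matrix (Fin m) (Fin n) Quat) : Set (Fin m → Quat) :=
  {y | ∃ x : Fin n → Quat, y = Matrix.mulVec A x}

/-- Right null space `N_r(A) = {x ∈ ℍ^{n×1} : Ax = 0}`. -/
def rightNull {m n : ℕ} (A : Matrix (Fin m) (Fin n) Quat) : Set (Fin n → Quat) :=
  {x | Matrix.mulVec A x = 0}

/-- The rank of a quaternion matrix: the dimension of its left range
(the left ℍ-span of its rows) as a left ℍ-vector space. -/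
def qRank {m n : ℕ} (A : Matrix (Fin m) (Fin n) Quat) : ℕ :=
  Module.finrank Quat (Submodule.span Quat (Set.range (fun i : Fin m => A i)))

/-!
Write B = T₁AS₁. If rank B = rank S₁, the row space of B = (T₁A)S₁ fills that of S₁, so
S₁ = WB; if rank B = rank T₁, the same argument for Bᴴ = (S₁ᴴAᴴ)T₁ᴴ gives T₁ = BV, since
conjugate transposition preserves quaternion rank (x(MMᴴ) = 0 forces xM = 0). With BYB = B
this yields XAS₁ = S₁ and T₁AX = T₁, from which XAX = X and the range and null space
conditions follow. Conversely, if X is an outer inverse of A with the range of S₁ and the null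
space of T₁, then S₁ = XAS₁, T₁ = T₁AX and X = XAX = (S₁Y)B(YT₁), so all three ranks agree.
For uniqueness, any such Z satisfies ZAX = X and T₁A(Z - X) = 0, hence ZA(Z - X) = 0 and
Z = ZAZ = ZAX = X.
-/

theorem Matrix.vecMulLinear_mul {R l m n : Type*} [Semiring R] [Fintype l] [Fintype m]
    (M : Matrix l m R) (N : Matrix m n R) :
    (M * N).vecMulLinear = N.vecMulLinear ∘ₗ M.vecMulLinear :=
  LinearMap.ext fun x => (vecMul_vecMul x M N).symm

theorem Quaternion.dotProduct_self_star_eq_zero {ι : Type*} [Fintype ι] {v : ι → Quat}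
    (h : v ⬝ᵥ star v = 0) : v = 0 := by
  have hsum : v ⬝ᵥ star v = algebraMap ℝ Quat (∑ i, Quaternion.normSq (v i)) := by
    simp only [dotProduct, Pi.star_apply, Quaternion.self_mul_star, map_sum,
      Quaternion.algebraMap_def]
  rw [hsum, map_eq_zero_iff _ Quaternion.algebraMap_injective,
    Fintype.sum_eq_zero_iff_of_nonneg fun _ => Quaternion.normSq_nonneg] at h
  exact funext fun i => Quaternion.normSq_eq_zero.mp (congrFun h i)

section Rank

variable {a b c : ℕ}

lemma qRank_eq_finrank_range (M : Matrix (Fin a) (Fin b) Quat) :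
    qRank M = Module.finrank Quat (LinearMap.range M.vecMulLinear) := by
  rw [qRank, range_vecMulLinear]
  rfl

lemma qRank_add_finrank_ker (M : Matrix (Fin a) (Fin b) Quat) :
    qRank M + Module.finrank Quat (LinearMap.ker M.vecMulLinear) = a := by
  rw [qRank_eq_finrank_range, LinearMap.finrank_range_add_finrank_ker, Module.finrank_fin_fun]

lemma qRank_mul_le_right (M : Matrix (Fin a) (Fin b) Quat) (N : Matrix (Fin b) (Fin c) Quat) :
    qRank (M * N) ≤ qRank N := by
  rw [qRank_eq_finrank_range, qRank_eq_finrank_range, vecMulLinear_mul]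
  exact Submodule.finrank_mono (LinearMap.range_comp_le_range _ _)

lemma qRank_mul_le_left (M : Matrix (Fin a) (Fin b) Quat) (N : Matrix (Fin b) (Fin c) Quat) :
    qRank (M * N) ≤ qRank M := by
  rw [qRank_eq_finrank_range, qRank_eq_finrank_range, vecMulLinear_mul, LinearMap.range_comp]
  exact Submodule.finrank_map_le _ _

lemma ker_vecMulLinear_mul_conjTranspose_self (M : Matrix (Fin a) (Fin b) Quat) :
    LinearMap.ker (M * Mᴴ).vecMulLinear = LinearMap.ker M.vecMulLinear := by
  refine le_antisymm (fun x hx => ?_) (vecMulLinear_mul M Mᴴ ▸ LinearMap.ker_le_ker_comp _ _)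
  simp only [LinearMap.mem_ker, vecMulLinear_apply, ← vecMul_vecMul] at hx ⊢
  -- `y ⬝ᵥ star y = (y ᵥ* Mᴴ) ⬝ᵥ star x` for `y = x ᵥ* M`
  apply Quaternion.dotProduct_self_star_eq_zero
  rw [star_vecMul, dotProduct_mulVec, hx, zero_dotProduct]

lemma qRank_mul_conjTranspose_self (M : Matrix (Fin a) (Fin b) Quat) :
    qRank (M * Mᴴ) = qRank M := by
  have h₁ := qRank_add_finrank_ker (M * Mᴴ)
  have h₂ := qRank_add_finrank_ker M
  rw [ker_vecMulLinear_mul_conjTranspose_self] at h₁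
  omega

lemma qRank_conjTranspose (M : Matrix (Fin a) (Fin b) Quat) : qRank Mᴴ = qRank M := by
  have h₁ := (qRank_mul_conjTranspose_self M).symm.trans_le (qRank_mul_le_right M Mᴴ)
  have h₂ := (qRank_mul_conjTranspose_self Mᴴ).symm.trans_le (qRank_mul_le_right Mᴴ Mᴴᴴ)
  rw [conjTranspose_conjTranspose] at h₂
  omega

lemma exists_eq_mul_of_qRank_mul_eq {M : Matrix (Fin a) (Fin b) Quat}
    {N : Matrix (Fin b) (Fin c) Quat} (h : qRank (M * N) = qRank N) :
    ∃ W : Matrix (Fin b) (Fin a) Quat, N = W * (M * N) := by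
  have hrange : LinearMap.range (M * N).vecMulLinear = LinearMap.range N.vecMulLinear := by
    refine Submodule.eq_of_le_of_finrank_eq ?_ (by simpa only [qRank_eq_finrank_range] using h)
    rw [vecMulLinear_mul]
    exact LinearMap.range_comp_le_range _ _
  have hrow (i : Fin b) : N i ∈ LinearMap.range (M * N).vecMulLinear :=
    hrange ▸ ⟨Pi.single i 1, single_one_vecMul i N⟩
  choose w hw using hrow
  exact ⟨Matrix.of w, funext fun i => (hw i).symm⟩

lemma exists_eq_mul_mul_of_qRank_mul_eq {M : Matrix (Fin a) (Fin b) Quat}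
    {N : Matrix (Fin b) (Fin c) Quat} (h : qRank (M * N) = qRank M) :
    ∃ V : Matrix (Fin c) (Fin b) Quat, M = M * N * V := by
  have h' : qRank (Nᴴ * Mᴴ) = qRank Mᴴ := by
    rwa [← conjTranspose_mul, qRank_conjTranspose, qRank_conjTranspose]
  obtain ⟨W, hW⟩ := exists_eq_mul_of_qRank_mul_eq h'
  refine ⟨Wᴴ, ?_⟩
  simpa [conjTranspose_mul] using congrArg conjTranspose hW

end Rank

section RangeNull

variable {a b c d : ℕ}

lemma rightRange_mul_subset (M : Matrix (Fin a) (Fin b) Quat) (N : Matrix (Fin b) (Fin c) Quat) :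
    rightRange (M * N) ⊆ rightRange M := by
  rintro _ ⟨x, rfl⟩
  exact ⟨N *ᵥ x, (mulVec_mulVec x M N).symm⟩

lemma rightNull_subset_mul (M : Matrix (Fin a) (Fin b) Quat) (N : Matrix (Fin b) (Fin c) Quat) :
    rightNull N ⊆ rightNull (M * N) := fun x (hx : N *ᵥ x = 0) => by
  change (M * N) *ᵥ x = 0
  rw [← mulVec_mulVec, hx, mulVec_zero]

lemma exists_eq_mul_of_rightRange_subset {M : Matrix (Fin a) (Fin b) Quat}
    {N : Matrix (Fin a) (Fin c) Quat} (h : rightRange M ⊆ rightRange N) :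
    ∃ V : Matrix (Fin c) (Fin b) Quat, M = N * V := by
  choose v hv using fun j => h ⟨Pi.single j 1, rfl⟩
  refine ⟨(Matrix.of v)ᵀ, ext_col fun j => ?_⟩
  rw [← mulVec_single_one, hv j]
  rfl

lemma mul_eq_zero_of_rightNull_subset {M : Matrix (Fin a) (Fin b) Quat}
    {M' : Matrix (Fin c) (Fin b) Quat} {N : Matrix (Fin b) (Fin d) Quat}
    (h : rightNull M ⊆ rightNull M') (hMN : M * N = 0) : M' * N = 0 :=
  ext_col fun j => h (congrArg (col · j) hMN : M *ᵥ N.col j = 0)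

end RangeNull

section InnerInverse

variable {a b c : ℕ} {M : Matrix (Fin a) (Fin b) Quat} {N : Matrix (Fin b) (Fin c) Quat}
  {Y : Matrix (Fin c) (Fin a) Quat}

lemma mul_mul_mul_eq_right_of_qRank_mul_eq (hY : M * N * Y * (M * N) = M * N)
    (h : qRank (M * N) = qRank N) : N * Y * (M * N) = N := by
  obtain ⟨W, hW⟩ := exists_eq_mul_of_qRank_mul_eq h
  calc N * Y * (M * N) = W * (M * N) * Y * (M * N) := by nth_rw 1 [hW]
    _ = W * (M * N * Y * (M * N)) := by simp only [Matrix.mul_assoc]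
    _ = N := by rw [hY, ← hW]

lemma mul_mul_mul_eq_left_of_qRank_mul_eq (hY : M * N * Y * (M * N) = M * N)
    (h : qRank (M * N) = qRank M) : M * N * Y * M = M := by
  obtain ⟨V, hV⟩ := exists_eq_mul_mul_of_qRank_mul_eq h
  calc M * N * Y * M = M * N * Y * (M * N * V) := by nth_rw 2 [hV]
    _ = M * N * Y * (M * N) * V := by simp only [Matrix.mul_assoc]
    _ = M := by rw [hY, ← hV]

end InnerInverse

section OuterInverse

variable {m n p q : ℕ} {A : Matrix (Fin m) (Fin n) Quat} {S : Matrix (Fin n) (Fin p) Quat}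
  {T : Matrix (Fin q) (Fin m) Quat} {Y : Matrix (Fin p) (Fin q) Quat}
  {X Z : Matrix (Fin n) (Fin m) Quat}

lemma mul_mul_eq_of_rightRange_subset (hX : X * A * X = X) (h : rightRange S ⊆ rightRange X) :
    X * A * S = S := by
  obtain ⟨U, rfl⟩ := exists_eq_mul_of_rightRange_subset h
  rw [← Matrix.mul_assoc, hX]

lemma mul_mul_eq_of_rightNull_subset (hX : X * A * X = X) (h : rightNull X ⊆ rightNull T) :
    T * A * X = T := by
  have hX' : X * (A * X - 1) = 0 := by
    rw [Matrix.mul_sub, ← Matrix.mul_assoc, hX, Matrix.mul_one, sub_self]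
  have hT := mul_eq_zero_of_rightNull_subset h hX'
  rwa [Matrix.mul_sub, Matrix.mul_one, sub_eq_zero, ← Matrix.mul_assoc] at hT

/-- The outer inverse `A^{(2)}_{R(S), N(T)}`. -/
def IsOuterInverseWith (A : Matrix (Fin m) (Fin n) Quat) (S : Matrix (Fin n) (Fin p) Quat)
    (T : Matrix (Fin q) (Fin m) Quat) (X : Matrix (Fin n) (Fin m) Quat) : Prop :=
  X * A * X = X ∧ rightRange X = rightRange S ∧ rightNull X = rightNull T

lemma IsOuterInverseWith.qRank_eq (h : IsOuterInverseWith A S T X) (hX : X = S * Y * T) :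
    qRank (T * A * S) = qRank S ∧ qRank (T * A * S) = qRank T := by
  obtain ⟨hXAX, hR, hN⟩ := h
  have hSX : qRank S ≤ qRank X := by
    rw [← mul_mul_eq_of_rightRange_subset hXAX hR.superset, Matrix.mul_assoc]
    exact qRank_mul_le_left _ _
  have hTX : qRank T ≤ qRank X := by
    rw [← mul_mul_eq_of_rightNull_subset hXAX hN.subset]
    exact qRank_mul_le_right _ _
  have hXB : qRank X ≤ qRank (T * A * S) := by
    have hfac : X = S * Y * (T * A * S) * (Y * T) := by
      rw [← hXAX, hX]
      simp only [Matrix.mul_assoc]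
    rw [hfac]
    exact (qRank_mul_le_left _ _).trans (qRank_mul_le_right _ _)
  have hBS := qRank_mul_le_right (T * A) S
  have hBT := qRank_mul_le_left T (A * S)
  rw [← Matrix.mul_assoc] at hBT
  omega

lemma mul_mul_eq_of_qRank_eq (hY : T * A * S * Y * (T * A * S) = T * A * S)
    (hX : X = S * Y * T) (hS : qRank (T * A * S) = qRank S) (hT : qRank (T * A * S) = qRank T) :
    X * A * S = S ∧ T * A * X = T := by
  have hY' : T * (A * S) * Y * (T * (A * S)) = T * (A * S) := by
    simpa only [Matrix.mul_assoc] using hY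
  rw [Matrix.mul_assoc] at hT
  constructor
  · simpa only [hX, Matrix.mul_assoc] using mul_mul_mul_eq_right_of_qRank_mul_eq hY hS
  · simpa only [hX, Matrix.mul_assoc] using mul_mul_mul_eq_left_of_qRank_mul_eq hY' hT

lemma isOuterInverseWith_of_mul_mul_eq (hX : X = S * Y * T) (hXS : X * A * S = S)
    (hTX : T * A * X = T) : IsOuterInverseWith A S T X := by
  refine ⟨?_, subset_antisymm ?_ ?_, subset_antisymm ?_ ?_⟩
  · calc X * A * X = X * A * S * (Y * T) := by rw [hX]; simp only [Matrix.mul_assoc]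
      _ = X := by rw [hXS, hX, Matrix.mul_assoc]
  · simpa only [hX, Matrix.mul_assoc] using rightRange_mul_subset S (Y * T)
  · simpa only [← Matrix.mul_assoc, hXS] using rightRange_mul_subset X (A * S)
  · simpa only [hTX] using rightNull_subset_mul (T * A) X
  · simpa only [hX] using rightNull_subset_mul (S * Y) T

lemma IsOuterInverseWith.eq_of_mul_mul_eq (hZ : IsOuterInverseWith A S T Z)
    (hX : X = S * Y * T) (hTX : T * A * X = T) : Z = X := by
  obtain ⟨hZAZ, hR, hN⟩ := hZ
  have hZX : Z * A * X = X :=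
    calc Z * A * X = Z * A * S * (Y * T) := by rw [hX]; simp only [Matrix.mul_assoc]
      _ = X := by rw [mul_mul_eq_of_rightRange_subset hZAZ hR.superset, hX, Matrix.mul_assoc]
  have hT0 : T * (A * (Z - X)) = 0 := by
    rw [Matrix.mul_sub, Matrix.mul_sub, ← Matrix.mul_assoc, ← Matrix.mul_assoc,
      mul_mul_eq_of_rightNull_subset hZAZ hN.subset, hTX, sub_self]
  have hZ0 := mul_eq_zero_of_rightNull_subset hN.superset hT0
  rwa [Matrix.mul_sub, Matrix.mul_sub, ← Matrix.mul_assoc, ← Matrix.mul_assoc, hZAZ, hZX,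
    sub_eq_zero] at hZ0

end OuterInverse

/-- Theorem 3.4 (d). -/
theorem stmt9 {m n p q : ℕ} (A : Matrix (Fin m) (Fin n) Quat)
    (S₁ : Matrix (Fin n) (Fin p) Quat) (T₁ : Matrix (Fin q) (Fin m) Quat)
    (Y : Matrix (Fin p) (Fin q) Quat)
    (hY : (T₁ * A * S₁) * Y * (T₁ * A * S₁) = T₁ * A * S₁)
    (X : Matrix (Fin n) (Fin m) Quat) (hX : X = S₁ * Y * T₁) :
    ((X * A * X = X ∧ rightRange X = rightRange S₁ ∧ rightNull X = rightNull T₁) ↔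
      (qRank (T₁ * A * S₁) = qRank S₁ ∧ qRank (T₁ * A * S₁) = qRank T₁)) ∧
    (qRank (T₁ * A * S₁) = qRank S₁ → qRank (T₁ * A * S₁) = qRank T₁ →
      ∀ Z : Matrix (Fin n) (Fin m) Quat,
        Z * A * Z = Z → rightRange Z = rightRange S₁ → rightNull Z = rightNull T₁ →
          Z = X) := by
  refine ⟨⟨fun h => IsOuterInverseWith.qRank_eq h hX, fun ⟨hS, hT⟩ => ?_⟩,
    fun hS hT Z hZAZ hZR hZN => ?_⟩
  · obtain ⟨hXS, hTX⟩ := mul_mul_eq_of_qRank_eq hY hX hS hT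
    exact isOuterInverseWith_of_mul_mul_eq hX hXS hTX
  · exact IsOuterInverseWith.eq_of_mul_mul_eq ⟨hZAZ, hZR, hZN⟩ hX
      (mul_mul_eq_of_qRank_eq hY hX hS hT).2
end
end

section
/- Let A ∈ ℍ^{m×n} be a quaternion matrix, let S₂ ∈ ℍ^{l×m} and T₂ ∈ ℍ^{n×t}, let Y ∈ ℍ^{t×l} be a {1}-inverse of S₂AT₂ (i.e. (S₂AT₂)·Y·(S₂AT₂) = S₂AT₂), and set X = T₂YS₂. Then X satisfies the three conditions XAX = X, R_l(X) = R_l(S₂), and N_l(X) = N_l(T₂) if and only if rank(S₂AT₂) = rank(S₂) = rank(T₂); moreover, when these rank equalities hold, X is the unique quaternion matrix in ℍ^{n×m} satisfying these three conditions. -/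
open Matrix

noncomputable section

/-!
Write `B = S₂ A T₂` and let matrices act on row vectors by `x ↦ x ᵥ* M`. Always
`R_l(B) ⊆ R_l(T₂)` and `N_l(S₂) ⊆ N_l(B)`, so the rank equalities say exactly that
`R_l(B) = R_l(T₂)` and `N_l(B) = N_l(S₂)`. Together with `BYB = B` these give `T₂ Y B = T₂`
and `B Y S₂ = S₂`, i.e. `T₂ = X (A T₂)` and `S₂ = (S₂ A) X`, which with `X = T₂ (Y S₂)` yield
the three conditions. Conversely `X = XAX = (T₂ Y) B (Y S₂)` has rank at most
`rank B ≤ rank S₂, rank T₂`. For uniqueness, `R_l(Z) ⊆ R_l(X)` gives `Z A X = Z` and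
`N_l(Z) ⊆ N_l(X)` gives `Z A X = X`.
-/

open LinearMap Module

namespace Matrix

variable {K : Type*} {l m n p : Type*}

section Ring

variable [Ring K]

theorem vecMulLinear_mul_s11 [Fintype l] [Fintype m] (M : Matrix l m K) (N : Matrix m n K) :
    (M * N).vecMulLinear = N.vecMulLinear ∘ₗ M.vecMulLinear :=
  LinearMap.ext fun x => (vecMul_vecMul x M N).symm

theorem range_vecMulLinear_mul_le [Fintype l] [Fintype m] (M : Matrix l m K) (N : Matrix m n K) :
    range (M * N).vecMulLinear ≤ range N.vecMulLinear := by
  rw [vecMulLinear_mul_s11]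
  exact range_comp_le_range _ _

theorem ker_vecMulLinear_le_mul [Fintype l] [Fintype m] (M : Matrix l m K) (N : Matrix m n K) :
    ker M.vecMulLinear ≤ ker (M * N).vecMulLinear := by
  rw [vecMulLinear_mul_s11]
  exact ker_le_ker_comp _ _

theorem mul_mul_eq_of_range_le [Fintype l] [Fintype m] [Fintype n]
    {B : Matrix m n K} {Y : Matrix n m K} {T : Matrix l n K}
    (hB : B * Y * B = B) (h : range T.vecMulLinear ≤ range B.vecMulLinear) :
    T * Y * B = T := by
  refine ext_iff_vecMul.2 fun x => ?_
  obtain ⟨u, hu⟩ := h ⟨x, rfl⟩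
  rw [vecMulLinear_apply, vecMulLinear_apply] at hu
  rw [← vecMul_vecMul, ← vecMul_vecMul, ← hu, vecMul_vecMul, vecMul_vecMul, ← Matrix.mul_assoc,
    hB]

theorem mul_mul_eq_of_ker_le [Fintype m] [Fintype n]
    {B : Matrix m n K} {Y : Matrix n m K} {S : Matrix m l K}
    (hB : B * Y * B = B) (h : ker B.vecMulLinear ≤ ker S.vecMulLinear) :
    B * Y * S = S := by
  refine ext_iff_vecMul.2 fun x => ?_
  have hker : x ᵥ* B ᵥ* Y - x ∈ ker B.vecMulLinear := by
    rw [mem_ker, vecMulLinear_apply, sub_vecMul, vecMul_vecMul, vecMul_vecMul, ← Matrix.mul_assoc,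
      hB, sub_self]
  have hS := h hker
  rwa [mem_ker, vecMulLinear_apply, sub_vecMul, sub_eq_zero, vecMul_vecMul, vecMul_vecMul,
    ← Matrix.mul_assoc] at hS

/-- `X` is the outer inverse `A^{(2)}_{R_l(S), N_l(T)}`. -/
def IsOuterInverseWith [Fintype l] [Fintype m] [Fintype n] (A : Matrix m n K) (X : Matrix n m K)
    (S : Matrix l m K) (T : Matrix n p K) : Prop :=
  X * A * X = X ∧ range X.vecMulLinear = range S.vecMulLinear ∧
    ker X.vecMulLinear = ker T.vecMulLinear

theorem IsOuterInverseWith.unique [Fintype l] [Fintype m] [Fintype n] {A : Matrix m n K}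
    {X Z : Matrix n m K} {S : Matrix l m K} {T : Matrix n p K}
    (hX : IsOuterInverseWith A X S T) (hZ : IsOuterInverseWith A Z S T) : Z = X :=
  calc Z = Z * A * X := (mul_mul_eq_of_range_le hX.1 (hZ.2.1.trans hX.2.1.symm).le).symm
    _ = X := mul_mul_eq_of_ker_le hZ.1 (hZ.2.2.trans hX.2.2.symm).le

end Ring

section DivisionRing

variable [DivisionRing K]

theorem finrank_range_vecMulLinear_mul_le_left [Fintype l] [Fintype m]
    (M : Matrix l m K) (N : Matrix m n K) :
    finrank K (range (M * N).vecMulLinear) ≤ finrank K (range M.vecMulLinear) := by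
  rw [vecMulLinear_mul_s11, range_comp]
  exact Submodule.finrank_map_le _ _

theorem finrank_range_vecMulLinear_mul_le_right [Fintype l] [Fintype m] [Fintype n]
    (M : Matrix l m K) (N : Matrix m n K) :
    finrank K (range (M * N).vecMulLinear) ≤ finrank K (range N.vecMulLinear) :=
  Submodule.finrank_mono (range_vecMulLinear_mul_le M N)

theorem finrank_range_add_finrank_ker_vecMulLinear [Fintype m] (M : Matrix m n K) :
    finrank K (range M.vecMulLinear) + finrank K (ker M.vecMulLinear) = Fintype.card m := by
  rw [finrank_range_add_finrank_ker, finrank_fintype_fun_eq_card]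

theorem range_vecMulLinear_mul_eq_of_finrank_eq [Fintype l] [Fintype m] [Fintype n]
    {M : Matrix l m K} {N : Matrix m n K}
    (h : finrank K (range (M * N).vecMulLinear) = finrank K (range N.vecMulLinear)) :
    range (M * N).vecMulLinear = range N.vecMulLinear :=
  Submodule.eq_of_le_of_finrank_eq (range_vecMulLinear_mul_le M N) h

theorem ker_vecMulLinear_mul_eq_of_finrank_eq [Fintype l] [Fintype m]
    {M : Matrix l m K} {N : Matrix m n K}
    (h : finrank K (range (M * N).vecMulLinear) = finrank K (range M.vecMulLinear)) :
    ker (M * N).vecMulLinear = ker M.vecMulLinear := by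
  refine (Submodule.eq_of_le_of_finrank_eq (ker_vecMulLinear_le_mul M N) ?_).symm
  have hM := finrank_range_add_finrank_ker_vecMulLinear M
  have hMN := finrank_range_add_finrank_ker_vecMulLinear (M * N)
  omega

theorem finrank_range_vecMulLinear_eq_of_ker_eq [Fintype m] {M : Matrix m n K}
    {N : Matrix m p K} (h : ker M.vecMulLinear = ker N.vecMulLinear) :
    finrank K (range M.vecMulLinear) = finrank K (range N.vecMulLinear) := by
  have hM := finrank_range_add_finrank_ker_vecMulLinear M
  have hN := finrank_range_add_finrank_ker_vecMulLinear N
  rw [h] at hM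
  omega

theorem isOuterInverseWith_of_finrank_eq [Fintype l] [Fintype m] [Fintype n] [Fintype p]
    {A : Matrix m n K} {S : Matrix l m K} {T : Matrix n p K} {Y : Matrix p l K}
    (hY : S * A * T * Y * (S * A * T) = S * A * T)
    (hS : finrank K (range (S * A * T).vecMulLinear) = finrank K (range S.vecMulLinear))
    (hT : finrank K (range (S * A * T).vecMulLinear) = finrank K (range T.vecMulLinear)) :
    IsOuterInverseWith A (T * Y * S) S T := by
  have hTYB : T * Y * (S * A * T) = T :=
    mul_mul_eq_of_range_le hY (range_vecMulLinear_mul_eq_of_finrank_eq hT).ge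
  have hBYS : S * A * T * Y * S = S := by
    rw [Matrix.mul_assoc S A T] at hY hS ⊢
    exact mul_mul_eq_of_ker_le hY (ker_vecMulLinear_mul_eq_of_finrank_eq hS).le
  have hT_eq : T * Y * S * (A * T) = T := by simpa only [Matrix.mul_assoc] using hTYB
  have hS_eq : S * A * (T * Y * S) = S := by simpa only [Matrix.mul_assoc] using hBYS
  refine ⟨?_, le_antisymm ?_ ?_, le_antisymm ?_ ?_⟩
  · calc T * Y * S * A * (T * Y * S) = T * Y * S * (A * T) * (Y * S) := by
          simp only [Matrix.mul_assoc]
      _ = T * Y * S := by rw [hT_eq, Matrix.mul_assoc]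
  · exact range_vecMulLinear_mul_le (T * Y) S
  · conv_lhs => rw [← hS_eq]
    exact range_vecMulLinear_mul_le (S * A) (T * Y * S)
  · conv_rhs => rw [← hT_eq]
    exact ker_vecMulLinear_le_mul (T * Y * S) (A * T)
  · rw [Matrix.mul_assoc]
    exact ker_vecMulLinear_le_mul T (Y * S)

theorem finrank_eq_of_isOuterInverseWith [Fintype l] [Fintype m] [Fintype n] [Fintype p]
    {A : Matrix m n K} {S : Matrix l m K} {T : Matrix n p K} {Y : Matrix p l K}
    (hX : IsOuterInverseWith A (T * Y * S) S T) :
    finrank K (range (S * A * T).vecMulLinear) = finrank K (range S.vecMulLinear) ∧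
      finrank K (range (S * A * T).vecMulLinear) = finrank K (range T.vecMulLinear) := by
  obtain ⟨hXAX, hR, hN⟩ := hX
  have hX_le : finrank K (range (T * Y * S).vecMulLinear) ≤
      finrank K (range (S * A * T).vecMulLinear) := by
    have hX_eq : T * Y * S = T * Y * (S * A * T) * (Y * S) := by
      conv_lhs => rw [← hXAX]
      simp only [Matrix.mul_assoc]
    rw [hX_eq]
    exact (finrank_range_vecMulLinear_mul_le_left _ _).trans
      (finrank_range_vecMulLinear_mul_le_right _ _)
  have hB_le_S : finrank K (range (S * A * T).vecMulLinear) ≤ finrank K (range S.vecMulLinear) :=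
    Matrix.mul_assoc S A T ▸ finrank_range_vecMulLinear_mul_le_left S (A * T)
  have hB_le_T := finrank_range_vecMulLinear_mul_le_right (S * A) T
  have hXS : finrank K (range (T * Y * S).vecMulLinear) = finrank K (range S.vecMulLinear) := by
    rw [hR]
  have hXT := finrank_range_vecMulLinear_eq_of_ker_eq hN
  omega

end DivisionRing

end Matrix

section Quaternion

variable {m n : ℕ}

theorem leftRange_eq_range_vecMulLinear (M : Matrix (Fin m) (Fin n) Quat) :
    leftRange M = range M.vecMulLinear := by
  ext y
  simp [leftRange, eq_comm]

theorem leftNull_eq_ker_vecMulLinear (M : Matrix (Fin m) (Fin n) Quat) :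
    leftNull M = ker M.vecMulLinear := rfl

theorem qRank_eq_finrank_range_vecMulLinear (M : Matrix (Fin m) (Fin n) Quat) :
    qRank M = finrank Quat (range M.vecMulLinear) := by
  rw [qRank, range_vecMulLinear]
  rfl

end Quaternion

/-- Theorem 3.5 (d). -/
theorem stmt11 {m n l t : ℕ} (A : Matrix (Fin m) (Fin n) Quat)
    (S₂ : Matrix (Fin l) (Fin m) Quat) (T₂ : Matrix (Fin n) (Fin t) Quat)
    (Y : Matrix (Fin t) (Fin l) Quat)
    (hY : (S₂ * A * T₂) * Y * (S₂ * A * T₂) = S₂ * A * T₂)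
    (X : Matrix (Fin n) (Fin m) Quat) (hX : X = T₂ * Y * S₂) :
    ((X * A * X = X ∧ leftRange X = leftRange S₂ ∧ leftNull X = leftNull T₂) ↔
      (qRank (S₂ * A * T₂) = qRank S₂ ∧ qRank (S₂ * A * T₂) = qRank T₂)) ∧
    (qRank (S₂ * A * T₂) = qRank S₂ → qRank (S₂ * A * T₂) = qRank T₂ →
      ∀ Z : Matrix (Fin n) (Fin m) Quat,
        Z * A * Z = Z → leftRange Z = leftRange S₂ → leftNull Z = leftNull T₂ →
          Z = X) := by
  subst hX
  simp only [qRank_eq_finrank_range_vecMulLinear, leftRange_eq_range_vecMulLinear,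
    leftNull_eq_ker_vecMulLinear, SetLike.coe_set_eq]
  refine ⟨⟨finrank_eq_of_isOuterInverseWith, fun ⟨hS, hT⟩ =>
    isOuterInverseWith_of_finrank_eq hY hS hT⟩, fun hS hT Z hZA hZR hZN => ?_⟩
  exact IsOuterInverseWith.unique (isOuterInverseWith_of_finrank_eq hY hS hT) ⟨hZA, hZR, hZN⟩
end
end
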